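/- For real r, let D₄(r) be the 4×4 matrix [[r, e^{−iπ/3}, 2e^{−2iπ/3}, −1], [e^{iπ/3}, r, e^{−iπ/3}, 2], [2e^{2iπ/3}, e^{iπ/3}, r, 1], [−1, 2, 1, r]]. Then: (1) det D₄(r) = r⁴ − 12r² + 6r + 17 for every real r; (2) the polynomial r⁴ − 12r² + 6r + 17 has a real root, and its largest real root r̂ is a simple root; (3) D₄(r̂) is Hermitian positive semidefinite of rank 3 (corank one); (4) the kernel of D₄(r̂) is spanned by the vector (2r̂² − 4i√3·r̂ − 5 + 5i√3, −4r̂² − 2i√3·r̂ + 16 + 4i√3, −2r̂² + 4r̂ − 3 − 3i√3, 2r̂³ − 12r̂ + 8)ᵀ ∈ ℂ⁴. -/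

import Mathlib

open scoped ComplexOrder

noncomputable def D4 (r : ℝ) : Matrix (Fin 4) (Fin 4) ℂ :=
  !![(r : ℂ), Complex.exp (-(Real.pi : ℂ) * Complex.I / 3),
       2 * Complex.exp (-(2 * (Real.pi : ℂ)) * Complex.I / 3), -1;
     Complex.exp ((Real.pi : ℂ) * Complex.I / 3), (r : ℂ),
       Complex.exp (-(Real.pi : ℂ) * Complex.I / 3), 2;
     2 * Complex.exp (2 * (Real.pi : ℂ) * Complex.I / 3),
       Complex.exp ((Real.pi : ℂ) * Complex.I / 3), (r : ℂ), 1;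
     -1, 2, 1, (r : ℂ)]

/-
Substituting `e^{±iπ/3} = (1 ± i√3)/2` and `e^{±2iπ/3} = (-1 ± i√3)/2` turns `D₄(r)` into
an explicit Hermitian matrix with diagonal `r`, and expanding gives
`det D₄(r) = (r + 1)(r³ - r² - 11r + 17)`. The cubic factor has a root `r̂ ≥ 2.7` beyond
which both factors are positive, so `r̂` is the largest real root. Since
`D₄(r̂) - t = D₄(r̂ - t)` is invertible for `t < 0`, no eigenvalue of `D₄(r̂)` is negative.
The displayed vector is twice the last column of the adjugate of `D₄(r)`, so it lies in the
kernel at `r̂`; Cramer's rule on the leading `3 × 3` block, whose determinant `r̂³ - 6r̂ + 4`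
is half the last entry and nonzero, shows that it spans the kernel.
-/

namespace Matrix

variable {m n K 𝕜 : Type*} [Fintype n]

theorem IsHermitian.posSemidef_of_det_sub_smul_one_ne_zero [DecidableEq n] [RCLike 𝕜]
    {A : Matrix n n 𝕜} (hA : A.IsHermitian) (h : ∀ t : ℝ, t < 0 → (A - (t : 𝕜) • 1).det ≠ 0) :
    A.PosSemidef := by
  rw [hA.posSemidef_iff_eigenvalues_nonneg]
  intro i
  by_contra hneg
  have hspec := spectrum.mem_iff.mp (hA.eigenvalues_mem_spectrum_real i)
  rw [Algebra.algebraMap_eq_smul_one, RCLike.real_smul_eq_coe_smul (K := 𝕜), ← IsUnit.neg_iff,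
    neg_sub, isUnit_iff_isUnit_det, isUnit_iff_ne_zero] at hspec
  exact hspec (h _ (not_le.mp hneg))

theorem mulVec_eq_zero_iff_exists_eq_smul [Field K] {A : Matrix m n K} {v : n → K} {i : n}
    (hv : A *ᵥ v = 0) (hvi : v i ≠ 0) (h : ∀ x, A *ᵥ x = 0 → v i • x = x i • v) (x : n → K) :
    A *ᵥ x = 0 ↔ ∃ c : K, x = c • v := by
  constructor
  · intro hx
    refine ⟨x i / v i, ?_⟩
    rw [div_eq_inv_mul, mul_smul, ← h x hx, smul_smul, inv_mul_cancel₀ hvi, one_smul]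
  · rintro ⟨c, rfl⟩
    rw [mulVec_smul, hv, smul_zero]

theorem rank_add_one_eq_card_of_mulVec_eq_zero_iff [Field K] {A : Matrix m n K} {v : n → K}
    (hv : v ≠ 0) (h : ∀ x, A *ᵥ x = 0 ↔ ∃ c : K, x = c • v) :
    A.rank + 1 = Fintype.card n := by
  have hker : LinearMap.ker A.mulVecLin = K ∙ v := by
    ext x
    simp only [LinearMap.mem_ker, mulVecLin_apply, Submodule.mem_span_singleton, h x, eq_comm]
  rw [rank, ← finrank_span_singleton (K := K) hv, ← hker, LinearMap.finrank_range_add_finrank_ker,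
    Module.finrank_fintype_fun_eq_card]

end Matrix

open Complex Matrix

local notation "ω" => I * ((√3 : ℝ) : ℂ)

lemma I_mul_sqrt_three_sq : ω ^ 2 = -3 := by
  rw [mul_pow, I_sq, ← ofReal_pow, Real.sq_sqrt (by norm_num)]
  push_cast; ring

lemma exp_pi_mul_I_div_three : exp (Real.pi * I / 3) = (1 + ω) / 2 := by
  rw [mul_div_right_comm, ← ofReal_ofNat, ← ofReal_div, exp_mul_I, ← ofReal_cos, ← ofReal_sin,
    Real.cos_pi_div_three, Real.sin_pi_div_three]
  push_cast; ring

lemma exp_neg_pi_mul_I_div_three : exp (-Real.pi * I / 3) = (1 - ω) / 2 := by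
  rw [mul_div_right_comm, ← ofReal_ofNat, ← ofReal_neg, ← ofReal_div, exp_mul_I, ← ofReal_cos,
    ← ofReal_sin, neg_div, Real.cos_neg, Real.sin_neg, Real.cos_pi_div_three,
    Real.sin_pi_div_three]
  push_cast; ring

lemma exp_two_pi_mul_I_div_three : exp (2 * Real.pi * I / 3) = (-1 + ω) / 2 := by
  rw [mul_assoc, mul_div_assoc, two_mul, exp_add, exp_pi_mul_I_div_three]
  linear_combination (1 / 4 : ℂ) * I_mul_sqrt_three_sq

lemma exp_neg_two_pi_mul_I_div_three :
    exp (-(2 * Real.pi) * I / 3) = (-1 - ω) / 2 := by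
  rw [neg_mul_eq_mul_neg, mul_assoc, mul_div_assoc, two_mul, exp_add,
    exp_neg_pi_mul_I_div_three]
  linear_combination (1 / 4 : ℂ) * I_mul_sqrt_three_sq

namespace D4

lemma eq_matrix (r : ℝ) : D4 r =
    !![(r : ℂ), (1 - ω) / 2, -1 - ω, -1;
       (1 + ω) / 2, (r : ℂ), (1 - ω) / 2, 2;
       -1 + ω, (1 + ω) / 2, (r : ℂ), 1;
       -1, 2, 1, (r : ℂ)] := by
  rw [D4, exp_pi_mul_I_div_three, exp_neg_pi_mul_I_div_three, exp_two_pi_mul_I_div_three,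
    exp_neg_two_pi_mul_I_div_three]
  ext i j
  fin_cases i <;> fin_cases j <;> simp <;> ring

lemma det_eq (r : ℝ) : (D4 r).det = (r : ℂ) ^ 4 - 12 * (r : ℂ) ^ 2 + 6 * (r : ℂ) + 17 := by
  rw [eq_matrix]
  simp [det_succ_row_zero, Fin.sum_univ_succ, Fin.succAbove]
  linear_combination (3 / 2 * (r : ℂ) ^ 2 - 3 / 2 * (r : ℂ) - 4) * I_mul_sqrt_three_sq

lemma isHermitian (r : ℝ) : (D4 r).IsHermitian := by
  rw [IsHermitian, eq_matrix]
  ext i j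
  fin_cases i <;> fin_cases j <;> simp [conjTranspose_apply] <;> ring

lemma sub_smul_one (r t : ℝ) : D4 r - (t : ℂ) • 1 = D4 (r - t) := by
  rw [eq_matrix, eq_matrix]
  ext i j
  fin_cases i <;> fin_cases j <;> simp

noncomputable def kerVec (r : ℝ) : Fin 4 → ℂ :=
  ![2 * (r : ℂ) ^ 2 - 4 * I * (√3 : ℂ) * (r : ℂ) - 5 + 5 * I * (√3 : ℂ),
    -4 * (r : ℂ) ^ 2 - 2 * I * (√3 : ℂ) * (r : ℂ) + 16 + 4 * I * (√3 : ℂ),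
    -2 * (r : ℂ) ^ 2 + 4 * (r : ℂ) - 3 - 3 * I * (√3 : ℂ),
    2 * (r : ℂ) ^ 3 - 12 * (r : ℂ) + 8]

lemma mulVec_kerVec {r : ℝ} (hr : (r : ℂ) ^ 3 - (r : ℂ) ^ 2 - 11 * (r : ℂ) + 17 = 0) :
    D4 r *ᵥ kerVec r = 0 := by
  rw [eq_matrix]
  ext j
  fin_cases j <;> simp [kerVec, mulVec, dotProduct, Fin.sum_univ_four, -ofReal_pow]
  · linear_combination (1 + (r : ℂ)) * I_mul_sqrt_three_sq
  · linear_combination (4 - 2 * (r : ℂ)) * I_mul_sqrt_three_sq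
  · linear_combination (7 - 5 * (r : ℂ)) * I_mul_sqrt_three_sq
  · linear_combination (2 + 2 * (r : ℂ)) * hr

lemma kerVec_three_smul_of_mulVec_eq_zero {r : ℝ} {x : Fin 4 → ℂ} (hx : D4 r *ᵥ x = 0) :
    kerVec r 3 • x = x 3 • kerVec r := by
  rw [eq_matrix] at hx
  have row0 := congrFun hx 0
  have row1 := congrFun hx 1
  have row2 := congrFun hx 2
  simp only [mulVec, dotProduct, Fin.isValue, of_apply, cons_val', cons_val_fin_one, cons_val_zero,
    Fin.sum_univ_four, cons_val_one, cons_val, neg_mul, one_mul, Pi.zero_apply] at row0 row1 row2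
  ext i
  -- Cramer's rule for the leading `3 × 3` block: the row coefficients are twice its adjugate.
  fin_cases i <;> simp [kerVec]
  · linear_combination (2 * (r : ℂ) ^ 2 - 2) * row0
      + (2 - 2 * ω - (r : ℂ) + (r : ℂ) * ω) * row1
      + (-1 - ω + 2 * (r : ℂ) + 2 * (r : ℂ) * ω) * row2
      + ((2 - 5 / 2 * (r : ℂ)) * x 0 + (1 / 2 - (r : ℂ)) * x 1 + (-1 + 1 / 2 * (r : ℂ)) * x 2)
        * I_mul_sqrt_three_sq
  · linear_combination (2 + 2 * ω - (r : ℂ) - (r : ℂ) * ω) * row0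
      + (2 * (r : ℂ) ^ 2 - 8) * row1
      + (2 - 2 * ω - (r : ℂ) + (r : ℂ) * ω) * row2
      + ((2 - (r : ℂ)) * x 0 + (2 - (r : ℂ)) * x 1 + (2 - (r : ℂ)) * x 2) * I_mul_sqrt_three_sq
  · linear_combination (-1 + ω + 2 * (r : ℂ) - 2 * (r : ℂ) * ω) * row0
      + (2 + 2 * ω - (r : ℂ) - (r : ℂ) * ω) * row1
      + (2 * (r : ℂ) ^ 2 - 2) * row2
      + ((-1 + 1 / 2 * (r : ℂ)) * x 0 + (1 / 2 - (r : ℂ)) * x 1 + (2 - 5 / 2 * (r : ℂ)) * x 2)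
        * I_mul_sqrt_three_sq
  · ring

end D4

lemma exists_cubic_root_ge : ∃ r : ℝ, 2.7 ≤ r ∧ r ^ 3 - r ^ 2 - 11 * r + 17 = 0 := by
  obtain ⟨r, hr, hroot⟩ := intermediate_value_Icc (by norm_num : (2.7 : ℝ) ≤ 2.8)
    (f := fun r : ℝ ↦ r ^ 3 - r ^ 2 - 11 * r + 17) (by fun_prop)
    (show (0 : ℝ) ∈ Set.Icc _ _ by norm_num)
  exact ⟨r, hr.1, hroot⟩

lemma le_of_quartic_eq_zero {r s : ℝ} (hr : 2.7 ≤ r) (hq : r ^ 3 - r ^ 2 - 11 * r + 17 = 0)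
    (hs : s ^ 4 - 12 * s ^ 2 + 6 * s + 17 = 0) : s ≤ r := by
  by_contra! hrs
  have hpos : 0 < s ^ 2 + s * r + r ^ 2 - s - r - 11 := by nlinarith
  have hcubic : 0 < s ^ 3 - s ^ 2 - 11 * s + 17 := by
    nlinarith [mul_pos (sub_pos.2 hrs) hpos]
  nlinarith [mul_pos (by linarith : 0 < s + 1) hcubic]

theorem stmt13 :
    (∀ r : ℝ, (D4 r).det = (r : ℂ) ^ 4 - 12 * (r : ℂ) ^ 2 + 6 * (r : ℂ) + 17) ∧
    ∃ rh : ℝ,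
      (rh ^ 4 - 12 * rh ^ 2 + 6 * rh + 17 = 0) ∧
      (∀ s : ℝ, s ^ 4 - 12 * s ^ 2 + 6 * s + 17 = 0 → s ≤ rh) ∧
      (4 * rh ^ 3 - 24 * rh + 6 ≠ 0) ∧
      (D4 rh).PosSemidef ∧ (D4 rh).rank = 3 ∧
      (∀ x : Fin 4 → ℂ, (D4 rh).mulVec x = 0 ↔
        ∃ c : ℂ, x = c •
          ![2 * (rh : ℂ) ^ 2 - 4 * Complex.I * (Real.sqrt 3 : ℂ) * (rh : ℂ) - 5
              + 5 * Complex.I * (Real.sqrt 3 : ℂ),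
            -4 * (rh : ℂ) ^ 2 - 2 * Complex.I * (Real.sqrt 3 : ℂ) * (rh : ℂ) + 16
              + 4 * Complex.I * (Real.sqrt 3 : ℂ),
            -2 * (rh : ℂ) ^ 2 + 4 * (rh : ℂ) - 3 - 3 * Complex.I * (Real.sqrt 3 : ℂ),
            2 * (rh : ℂ) ^ 3 - 12 * (rh : ℂ) + 8]) := by
  obtain ⟨rh, hge, hq⟩ := exists_cubic_root_ge
  have hmax : ∀ s : ℝ, s ^ 4 - 12 * s ^ 2 + 6 * s + 17 = 0 → s ≤ rh :=
    fun s hs ↦ le_of_quartic_eq_zero hge hq hs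
  have hv3 : D4.kerVec rh 3 ≠ 0 := by
    have : 0 < 2 * rh ^ 3 - 12 * rh + 8 := by nlinarith
    have hC : ((2 * rh ^ 3 - 12 * rh + 8 : ℝ) : ℂ) ≠ 0 := by exact_mod_cast this.ne'
    simpa [D4.kerVec] using hC
  have hker := mulVec_eq_zero_iff_exists_eq_smul (D4.mulVec_kerVec (by exact_mod_cast hq)) hv3
    fun _ ↦ D4.kerVec_three_smul_of_mulVec_eq_zero
  have hpsd : (D4 rh).PosSemidef := by
    refine (D4.isHermitian rh).posSemidef_of_det_sub_smul_one_ne_zero fun t ht ↦ ?_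
    have : (rh - t) ^ 4 - 12 * (rh - t) ^ 2 + 6 * (rh - t) + 17 ≠ 0 :=
      fun h ↦ (hmax _ h).not_gt (by linarith)
    change (D4 rh - (t : ℂ) • 1).det ≠ 0
    rw [D4.sub_smul_one, D4.det_eq]
    exact_mod_cast this
  have hrank := rank_add_one_eq_card_of_mulVec_eq_zero_iff (fun h ↦ hv3 (congrFun h 3)) hker
  rw [Fintype.card_fin] at hrank
  exact ⟨D4.det_eq, rh, by linear_combination (rh + 1) * hq, hmax, by nlinarith, hpsd, by omega,
    hker⟩
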